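/- Let λ > 0, let σ be a real p×p matrix with σσᵀ invertible, set R := λ(σσᵀ)⁻¹, let B : ℝⁿ → ℝ^{n×p}, f : ℝ × ℝⁿ → ℝⁿ and q : ℝ × ℝⁿ → ℝ be given, and let V : ℝ × ℝⁿ → ℝ be such that at a point (t,x) the partial derivative ∂ₜV exists and x ↦ V(t,x) is twice differentiable. Define Z := exp(−V/λ). Then V satisfies the minimized stochastic HJB equation −∂ₜV(t,x) = q(t,x) + f(t,x)ᵀ∇ₓV(t,x) − (1/2)∇ₓV(t,x)ᵀB(x)R⁻¹B(x)ᵀ∇ₓV(t,x) + (1/2)tr(B(x)σσᵀB(x)ᵀ·Hessₓ V(t,x)) at (t,x) if and only if Z satisfies the linear partial differential equation ∂ₜZ(t,x) = (q(t,x)/λ)Z(t,x) − f(t,x)ᵀ∇ₓZ(t,x) − (1/2)tr(B(x)σσᵀB(x)ᵀ·Hessₓ Z(t,x)) at (t,x). -/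

import Mathlib

open Matrix

/-- The gradient of `V : ℝⁿ → ℝ` at `x`, as the vector of partial derivatives. -/
noncomputable def gradv {n : ℕ} (V : (Fin n → ℝ) → ℝ) (x : Fin n → ℝ) : Fin n → ℝ :=
  fun i => fderiv ℝ V x (Pi.single i 1)

/-- The Hessian of `V : ℝⁿ → ℝ` at `x`, as the matrix of second partial derivatives. -/
noncomputable def hessm {n : ℕ} (V : (Fin n → ℝ) → ℝ) (x : Fin n → ℝ) :
    Matrix (Fin n) (Fin n) ℝ :=
  Matrix.of fun i j => fderiv ℝ (fun y => fderiv ℝ V y (Pi.single j 1)) x (Pi.single i 1)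

/-! Writing `Z = φ ∘ V` with `φ v = exp (-v / λ)`, the chain rule gives `∂Z = -(Z/λ) ∂V` for the
time and space derivatives and `Hess Z = (Z/λ²) ∇V ∇Vᵀ - (Z/λ) Hess V`. Since `R⁻¹ = λ⁻¹ σσᵀ`, the
quadratic term `∇Vᵀ B R⁻¹ Bᵀ ∇V` of the HJB equation is exactly what the rank-one part of `Hess Z`
contributes to `tr (B σσᵀ Bᵀ Hess Z)`, so the linear equation for `Z` is the HJB equation for `V`
multiplied by the positive factor `Z/λ`. -/

theorem Matrix.inv_smul_nonsing_inv {ι K : Type*} [Fintype ι] [DecidableEq ι] [Field K]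
    {M : Matrix ι ι K} (hM : IsUnit M.det) {c : K} (hc : c ≠ 0) : (c • M⁻¹)⁻¹ = c⁻¹ • M := by
  refine inv_eq_left_inv ?_
  rw [smul_mul_smul_comm, inv_mul_cancel₀ hc, mul_nonsing_inv M hM, one_smul]

theorem hasDerivAt_exp_neg_div (c v : ℝ) :
    HasDerivAt (fun v => Real.exp (-v / c)) (-c⁻¹ * Real.exp (-v / c)) v := by
  convert ((hasDerivAt_neg v).div_const c).exp using 1
  ring

section ChainRule

variable {n : ℕ} {φ φ' : ℝ → ℝ} {W : (Fin n → ℝ) → ℝ} {x : Fin n → ℝ}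

theorem fderiv_comp_apply_of_hasDerivAt {d : ℝ} (hφ : HasDerivAt φ d (W x))
    (hW : DifferentiableAt ℝ W x) (v : Fin n → ℝ) :
    fderiv ℝ (fun y => φ (W y)) x v = d * fderiv ℝ W x v := by
  change fderiv ℝ (φ ∘ W) x v = _
  rw [(hφ.comp_hasFDerivAt x hW.hasFDerivAt).fderiv]
  rfl

theorem gradv_comp {d : ℝ} (hφ : HasDerivAt φ d (W x)) (hW : DifferentiableAt ℝ W x) :
    gradv (fun y => φ (W y)) x = d • gradv W x :=
  funext fun _ => fderiv_comp_apply_of_hasDerivAt hφ hW _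

theorem hessm_comp {φ'' : ℝ} (hφ : ∀ v, HasDerivAt φ (φ' v) v) (hφ' : HasDerivAt φ' φ'' (W x))
    (hW : ∀ᶠ y in nhds x, DifferentiableAt ℝ W y) (hW' : DifferentiableAt ℝ (fderiv ℝ W) x) :
    hessm (fun y => φ (W y)) x =
      φ'' • vecMulVec (gradv W x) (gradv W x) + φ' (W x) • hessm W x := by
  ext i j
  have hWx : DifferentiableAt ℝ W x := hW.self_of_nhds
  have hpartial : (fun y => fderiv ℝ (fun z => φ (W z)) y (Pi.single j 1)) =ᶠ[nhds x]
      fun y => φ' (W y) * fderiv ℝ W y (Pi.single j 1) :=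
    hW.mono fun y hy => fderiv_comp_apply_of_hasDerivAt (hφ _) hy _
  have hφ'W : DifferentiableAt ℝ (fun y => φ' (W y)) x :=
    hφ'.differentiableAt.comp x hWx
  have hpartialW : DifferentiableAt ℝ (fun y => fderiv ℝ W y (Pi.single j 1)) x :=
    hW'.clm_apply (differentiableAt_const _)
  simp only [hessm, of_apply, hpartial.fderiv_eq, fderiv_fun_mul hφ'W hpartialW, _root_.add_apply,
    _root_.smul_apply, smul_eq_mul, fderiv_comp_apply_of_hasDerivAt hφ' hWx, gradv,
    Matrix.add_apply, Matrix.smul_apply, vecMulVec_apply]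
  ring

end ChainRule

/-- With `R = λ(σσᵀ)⁻¹` and `Z = exp(−V/λ)`, the value function `V`
satisfies the minimized stochastic HJB equation
`−∂ₜV = q + fᵀ∇ₓV − (1/2)∇ₓVᵀBR⁻¹Bᵀ∇ₓV + (1/2)tr(BσσᵀBᵀ HessₓV)` at `(t,x)`
if and only if `Z` satisfies the linear PDE
`∂ₜZ = (q/λ)Z − fᵀ∇ₓZ − (1/2)tr(BσσᵀBᵀ HessₓZ)` at `(t,x)`. -/
theorem hjb_linearization {n p : ℕ} (lam : ℝ) (hlam : 0 < lam)
    (sg : Matrix (Fin p) (Fin p) ℝ) (hsg : IsUnit (sg * sgᵀ).det)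
    (R : Matrix (Fin p) (Fin p) ℝ) (hR : R = lam • (sg * sgᵀ)⁻¹)
    (B : (Fin n → ℝ) → Matrix (Fin n) (Fin p) ℝ)
    (f : ℝ → (Fin n → ℝ) → (Fin n → ℝ))
    (q : ℝ → (Fin n → ℝ) → ℝ)
    (V : ℝ → (Fin n → ℝ) → ℝ) (t : ℝ) (x : Fin n → ℝ)
    (ht : DifferentiableAt ℝ (fun s => V s x) t)
    (hx1 : ∀ᶠ y in nhds x, DifferentiableAt ℝ (V t) y)
    (hx2 : DifferentiableAt ℝ (fderiv ℝ (V t)) x)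
    (Z : ℝ → (Fin n → ℝ) → ℝ)
    (hZ : Z = fun s y => Real.exp (-V s y / lam)) :
    (-deriv (fun s => V s x) t =
        q t x + (f t x ⬝ᵥ gradv (V t) x)
          - (1 / 2) * (gradv (V t) x ⬝ᵥ ((B x * R⁻¹ * (B x)ᵀ) *ᵥ gradv (V t) x))
          + (1 / 2) * ((B x * sg * sgᵀ * (B x)ᵀ) * hessm (V t) x).trace) ↔
    (deriv (fun s => Z s x) t =
        (q t x / lam) * Z t x - (f t x ⬝ᵥ gradv (Z t) x)
          - (1 / 2) * ((B x * sg * sgᵀ * (B x)ᵀ) * hessm (Z t) x).trace) := by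
  subst hZ hR
  beta_reduce
  have hVx : DifferentiableAt ℝ (V t) x := hx1.self_of_nhds
  have hexp := hasDerivAt_exp_neg_div lam
  set E := Real.exp (-V t x / lam)
  have hdZ : deriv (fun s => Real.exp (-V s x / lam)) t =
      -lam⁻¹ * E * deriv (fun s => V s x) t :=
    ((hexp (V t x)).comp t ht.hasDerivAt :).deriv
  have hgradZ : gradv (fun y => Real.exp (-V t y / lam)) x = (-lam⁻¹ * E) • gradv (V t) x :=
    gradv_comp (hexp _) hVx
  have hhessZ : hessm (fun y => Real.exp (-V t y / lam)) x =
      (-lam⁻¹ * (-lam⁻¹ * E)) • vecMulVec (gradv (V t) x) (gradv (V t) x) +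
        (-lam⁻¹ * E) • hessm (V t) x :=
    hessm_comp hexp ((hexp _).const_mul _) hx1 hx2
  rw [Matrix.inv_smul_nonsing_inv hsg hlam.ne', hdZ, hgradZ, hhessZ]
  simp only [Matrix.mul_smul, Matrix.smul_mul, smul_mulVec, dotProduct_smul, Matrix.mul_add,
    trace_add, trace_smul, mul_vecMulVec, trace_vecMulVec, smul_eq_mul, ← Matrix.mul_assoc]
  have hE : lam⁻¹ * E ≠ 0 := by positivity
  rw [dotProduct_comm (_ *ᵥ _), ← mul_right_inj' hE]
  constructor <;> intro h <;> linear_combination h
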